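/- Let I, J, Ω be dyadic intervals with |I| = |J| = 2|Ω|^{-1} (so I×J×Ω is a multitile). Then for almost all x₁, x₂, x₃, y₁, y₂: 8·Σ_{α,β∈{0,1}} w_{I_α,0}(x₁) w_{I_α×Ω}(x₂) w_{I_α×Ω}(x₃) w_{J_β×Ω}(y₁) w_{J_β×Ω}(y₂) − Σ_{γ∈{0,1}} w_{I,0}(x₁) w_{I×Ω_γ}(x₂) w_{I×Ω_γ}(x₃) w_{J×Ω_γ}(y₁) w_{J×Ω_γ}(y₂) = Σ_{γ∈{0,1}} w_{I,0}(x₁) w_{I×Ω_{γ⊕1}}(x₂) w_{I×Ω_{γ⊕1}}(x₃) w_{J×Ω_γ}(y₁) w_{J×Ω_γ}(y₂) + Σ_{γ,δ∈{0,1}} w_{I,1}(x₁) w_{I×Ω_δ}(x₂) w_{I×Ω_{δ⊕1}}(x₃) w_{J×Ω_γ}(y₁) w_{J×Ω_γ}(y₂), where I₀,I₁ (resp. J₀,J₁; Ω₀,Ω₁) denote left/right halves and γ⊕1 = 1−γ. -/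

import Mathlib

open MeasureTheory

/-- The `j`-th binary digit of a nonnegative real number `x`. -/
noncomputable def bdigit (x : ℝ) (j : ℤ) : ℕ := (Int.toNat ⌊x / 2 ^ j⌋) % 2

/-- Binary digitwise addition (XOR) of nonnegative reals. -/
noncomputable def dxor (x y : ℝ) : ℝ :=
  ∑' j : ℤ, (((bdigit x j + bdigit y j) % 2 : ℕ) : ℝ) * 2 ^ j

/-- The dyadic interval `[2^{-k} l, 2^{-k} (l+1))`. -/
def dyadicI (k : ℤ) (l : ℕ) : Set ℝ :=
  Set.Ico ((2 : ℝ) ^ (-k) * l) ((2 : ℝ) ^ (-k) * (l + 1))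

/-- The L^∞-normalized Walsh wave packet `w_{I,n}` for `I = [2^{-k} l, 2^{-k}(l+1))`. -/
noncomputable def walsh (k : ℤ) (l n : ℕ) (x : ℝ) : ℝ :=
  Set.indicator (dyadicI k l)
    (fun x => (-1 : ℝ) ^ (∑ j ∈ Finset.range (n + 1),
      (Nat.testBit n j).toNat * bdigit x (-(j : ℤ) - k - 1))) x

/-- The Walsh–Fourier average `[f]_{I,n} = |I|^{-1} ∫_I f w_{I,n}`. -/
noncomputable def avg (k : ℤ) (l n : ℕ) (f : ℝ → ℝ) : ℝ :=
  (2 : ℝ) ^ k * ∫ x in dyadicI k l, f x * walsh k l n x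

/-- A real-valued dyadic step function supported on `[0,1)²`. -/
def IsDyadicStep (F : ℝ → ℝ → ℝ) : Prop :=
  ∃ (s : Finset ((ℤ × ℕ) × (ℤ × ℕ))) (c : (ℤ × ℕ) × (ℤ × ℕ) → ℝ),
    (∀ p ∈ s, dyadicI p.1.1 p.1.2 ⊆ Set.Ico (0 : ℝ) 1 ∧
      dyadicI p.2.1 p.2.2 ⊆ Set.Ico (0 : ℝ) 1) ∧
    ∀ x y : ℝ, F x y = ∑ p ∈ s, c p * Set.indicator (dyadicI p.1.1 p.1.2) 1 x *
      Set.indicator (dyadicI p.2.1 p.2.2) 1 y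

/-- `F` is constant on dyadic squares with sides of length `2^{-M}`. -/
def ConstOnSquares (M : ℕ) (F : ℝ → ℝ → ℝ) : Prop :=
  ∀ l₁ l₂ : ℕ, ∀ x ∈ dyadicI (M : ℤ) l₁, ∀ x' ∈ dyadicI (M : ℤ) l₁,
    ∀ y ∈ dyadicI (M : ℤ) l₂, ∀ y' ∈ dyadicI (M : ℤ) l₂, F x y = F x' y'

/-! By the recursions `w_{I×Ω₀} = w_{I₀×Ω} + w_{I₁×Ω}` and `w_{I×Ω₁} = w_{I₀×Ω} − w_{I₁×Ω}`
(for `w_{I,0}` and `w_{I,1}` take `n = 0`), every packet over `I` or `J` is the sum or the difference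
`u⁺`, `u⁻` of the two packets `u₀`, `u₁` over the halves. The sums over `γ, δ` then collapse through
`u⁺v⁺ + u⁻v⁻ = 2 (u₀v₀ + u₁v₁)` and `u⁺v⁻ + u⁻v⁺ = 2 (u₀v₀ − u₁v₁)`, and both sides become the same
polynomial in the ten fine-scale values: the identity holds at every point. -/

open Finset

lemma mem_dyadicI_iff {k : ℤ} {l : ℕ} {x : ℝ} : x ∈ dyadicI k l ↔ ⌊x * 2 ^ k⌋ = l := by
  have h2k : (0 : ℝ) < 2 ^ k := by positivity
  rw [dyadicI, Set.mem_Ico, Int.floor_eq_iff, zpow_neg, inv_mul_le_iff₀ h2k, lt_inv_mul_iff₀ h2k,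
    mul_comm x]
  push_cast
  rfl

lemma bdigit_of_mem_dyadicI_succ {k : ℤ} {m : ℕ} {x : ℝ} (hx : x ∈ dyadicI (k + 1) m) :
    bdigit x (-k - 1) = m % 2 := by
  rw [mem_dyadicI_iff] at hx
  rw [bdigit, show -k - 1 = -(k + 1) by ring, zpow_neg, div_inv_eq_mul, hx, Int.toNat_natCast]

lemma dyadicI_succ_halves_partition (k : ℤ) (l : ℕ) :
    dyadicI (k + 1) (2 * l) ∪ dyadicI (k + 1) (2 * l + 1) = dyadicI k l ∧
      Disjoint (dyadicI (k + 1) (2 * l)) (dyadicI (k + 1) (2 * l + 1)) := by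
  have hscale : (2 : ℝ) ^ (-k) = 2 ^ (-(k + 1)) * 2 := by
    rw [← zpow_add_one₀ two_ne_zero]; ring_nf
  have hlo : (2 : ℝ) ^ (-(k + 1)) * ((2 * l : ℕ) : ℝ) = 2 ^ (-k) * l := by
    rw [hscale]; push_cast; ring
  have hhi : (2 : ℝ) ^ (-(k + 1)) * (((2 * l + 1 : ℕ) : ℝ) + 1) = 2 ^ (-k) * (l + 1) := by
    rw [hscale]; push_cast; ring
  have hmid : (2 : ℝ) ^ (-(k + 1)) * (((2 * l : ℕ) : ℝ) + 1) =
      2 ^ (-(k + 1)) * ((2 * l + 1 : ℕ) : ℝ) := by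
    push_cast; ring
  have hpos : (0 : ℝ) < 2 ^ (-(k + 1)) := by positivity
  simp only [dyadicI, hlo, hhi, hmid]
  refine ⟨Set.Ico_union_Ico_eq_Ico ?_ ?_, Set.Ico_disjoint_Ico_same⟩ <;> push_cast <;> nlinarith

noncomputable def walshExponent (k : ℤ) (n : ℕ) (x : ℝ) : ℕ :=
  ∑ j ∈ range (n + 1), (n.testBit j).toNat * bdigit x (-(j : ℤ) - k - 1)

lemma walsh_eq_indicator (k : ℤ) (l n : ℕ) :
    walsh k l n = (dyadicI k l).indicator fun x => (-1 : ℝ) ^ walshExponent k n x := rfl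

lemma sum_range_testBit_mul_of_lt {n A B : ℕ} (c : ℕ → ℕ) (hA : n < 2 ^ A) (hAB : A ≤ B) :
    ∑ j ∈ range B, (n.testBit j).toNat * c j = ∑ j ∈ range A, (n.testBit j).toNat * c j := by
  refine (sum_subset (range_subset_range.2 hAB) fun j _ hj => ?_).symm
  have hnj : n < 2 ^ j := hA.trans_le (Nat.pow_le_pow_right two_pos (by simpa using hj))
  simp [Nat.testBit_lt_two_pow hnj]

/-- The lowest bit of `2n + γ` reads the digit that selects the half of `I`; the other bits are
those of `n`, read at the next finer scale. -/
lemma walshExponent_two_mul_add (k : ℤ) (n : ℕ) {γ : ℕ} (hγ : γ < 2) (x : ℝ) :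
    walshExponent k (2 * n + γ) x = γ * bdigit x (-k - 1) + walshExponent (k + 1) n x := by
  have hlow : ((2 * n + γ).testBit 0).toNat = γ := by
    rw [Nat.testBit_zero]; interval_cases γ <;> simp
  have hhigh (j : ℕ) : (2 * n + γ).testBit (j + 1) = n.testBit j := by
    rw [Nat.testBit_succ]; congr 1; omega
  have hdigit (j : ℕ) : -((j + 1 : ℕ) : ℤ) - k - 1 = -(j : ℤ) - (k + 1) - 1 := by push_cast; ring
  have hn := n.lt_two_pow_self
  rw [walshExponent, walshExponent, sum_range_succ']
  simp only [hhigh, hdigit, hlow, Nat.cast_zero, neg_zero, zero_sub]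
  rw [sum_range_testBit_mul_of_lt (B := 2 * n + γ) _ hn (by omega),
    sum_range_testBit_mul_of_lt (B := n + 1) _ hn (by omega), add_comm]

lemma walsh_two_mul_add (k : ℤ) (l n : ℕ) {γ : ℕ} (hγ : γ < 2) (x : ℝ) :
    walsh k l (2 * n + γ) x =
      walsh (k + 1) (2 * l) n x + (-1) ^ γ * walsh (k + 1) (2 * l + 1) n x := by
  obtain ⟨hunion, hdisj⟩ := dyadicI_succ_halves_partition k l
  simp only [walsh_eq_indicator, walshExponent_two_mul_add k n hγ, pow_add, pow_mul]
  by_cases hleft : x ∈ dyadicI (k + 1) (2 * l)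
  · have hright : x ∉ dyadicI (k + 1) (2 * l + 1) := hdisj.notMem_of_mem_left hleft
    rw [Set.indicator_of_mem (hunion ▸ Or.inl hleft), Set.indicator_of_mem hleft,
      Set.indicator_of_notMem hright, bdigit_of_mem_dyadicI_succ hleft]
    simp
  by_cases hright : x ∈ dyadicI (k + 1) (2 * l + 1)
  · rw [Set.indicator_of_mem (hunion ▸ Or.inr hright), Set.indicator_of_notMem hleft,
      Set.indicator_of_mem hright, bdigit_of_mem_dyadicI_succ hright]
    simp [Nat.add_mod]
  · have hout : x ∉ dyadicI k l := hunion ▸ fun h => h.elim hleft hright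
    simp [Set.indicator_of_notMem, hout, hleft, hright]

lemma walsh_two_mul (k : ℤ) (l n : ℕ) (x : ℝ) :
    walsh k l (2 * n) x = walsh (k + 1) (2 * l) n x + walsh (k + 1) (2 * l + 1) n x := by
  simpa using walsh_two_mul_add k l n (γ := 0) two_pos x

lemma walsh_two_mul_add_one (k : ℤ) (l n : ℕ) (x : ℝ) :
    walsh k l (2 * n + 1) x = walsh (k + 1) (2 * l) n x - walsh (k + 1) (2 * l + 1) n x := by
  simpa [sub_eq_add_neg] using walsh_two_mul_add k l n one_lt_two x

theorem multitile_identity_B1 (k : ℤ) (l₁ l₂ n : ℕ) :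
    ∀ᵐ p : ℝ × ℝ × ℝ × ℝ × ℝ ∂(volume : Measure (ℝ × ℝ × ℝ × ℝ × ℝ)),
      8 * (∑ α ∈ Finset.range 2, ∑ β ∈ Finset.range 2,
          walsh (k + 1) (2 * l₁ + α) 0 p.1 * walsh (k + 1) (2 * l₁ + α) n p.2.1 *
          walsh (k + 1) (2 * l₁ + α) n p.2.2.1 *
          walsh (k + 1) (2 * l₂ + β) n p.2.2.2.1 * walsh (k + 1) (2 * l₂ + β) n p.2.2.2.2)
        - (∑ γ ∈ Finset.range 2,
          walsh k l₁ 0 p.1 * walsh k l₁ (2 * n + γ) p.2.1 * walsh k l₁ (2 * n + γ) p.2.2.1 *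
          walsh k l₂ (2 * n + γ) p.2.2.2.1 * walsh k l₂ (2 * n + γ) p.2.2.2.2)
      = (∑ γ ∈ Finset.range 2,
          walsh k l₁ 0 p.1 * walsh k l₁ (2 * n + (1 - γ)) p.2.1 * walsh k l₁ (2 * n + (1 - γ)) p.2.2.1 *
          walsh k l₂ (2 * n + γ) p.2.2.2.1 * walsh k l₂ (2 * n + γ) p.2.2.2.2)
        + (∑ γ ∈ Finset.range 2, ∑ δ ∈ Finset.range 2,
          walsh k l₁ 1 p.1 * walsh k l₁ (2 * n + δ) p.2.1 * walsh k l₁ (2 * n + (1 - δ)) p.2.2.1 *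
          walsh k l₂ (2 * n + γ) p.2.2.2.1 * walsh k l₂ (2 * n + γ) p.2.2.2.2) := by
  refine ae_of_all _ fun p => ?_
  have walsh_zero (l : ℕ) (x : ℝ) := walsh_two_mul k l 0 x
  have walsh_one (l : ℕ) (x : ℝ) := walsh_two_mul_add_one k l 0 x
  simp only [mul_zero, zero_add] at walsh_zero walsh_one
  simp only [sum_range_succ, sum_range_zero, zero_add, add_zero, Nat.sub_zero, Nat.sub_self,
    walsh_zero, walsh_one, walsh_two_mul, walsh_two_mul_add_one]
  ring
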